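/- arXiv:1412.5274 — 5 statements merged into one kernel-verified Lean document; each statement's English description precedes it below -/
import Mathlib

section
/- Let 0 < q < 1 and p > 1. For any sequence of positive reals (a_n)_{n≥1} with ∑ a_n^p < ∞, one has ∑_{n=1}^∞ ( q^{-n} ∑_{k=n}^∞ q^k a_k )^p ≤ (1-q)^{-p} ∑_{n=1}^∞ a_n^p. -/
/-!
After cancelling `q^{-n}`, the `n`-th term is `(∑ₖ wₖ A_{n+k})^p` with `wₖ = q^k`, `Aₘ = a_{m+1}`.
By the weighted Hölder (Jensen) inequality it is at most `(∑ w)^(p-1) ∑ₖ wₖ A_{n+k}^p`. Summing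
over `n` and exchanging the order of summation, every `Aₘ^p` is counted with total weight at most
`∑ w = (1 - q)⁻¹`, which gives the constant `(∑ w)^p`. The argument runs in `ℝ≥0∞`, where all
sums exist, and is transferred to `ℝ` at the end.
-/

open scoped ENNReal

namespace ENNReal

theorem inner_le_weight_mul_Lp_tsum {ι : Type*} {p : ℝ} (hp : 1 ≤ p) (w f : ι → ℝ≥0∞) :
    ∑' i, w i * f i ≤ (∑' i, w i) ^ (1 - p⁻¹) * (∑' i, w i * f i ^ p) ^ p⁻¹ := by
  have hp₀ : 0 ≤ p⁻¹ := inv_nonneg.2 (zero_le_one.trans hp)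
  have hp₁ : 0 ≤ 1 - p⁻¹ := sub_nonneg.2 (inv_le_one_of_one_le₀ hp)
  rw [ENNReal.tsum_eq_iSup_sum]
  refine iSup_le fun s => (inner_le_weight_mul_Lp_of_nonneg s hp w f).trans ?_
  gcongr <;> exact ENNReal.sum_le_tsum s

theorem rpow_tsum_mul_le {ι : Type*} {p : ℝ} (hp : 1 ≤ p) (w f : ι → ℝ≥0∞) :
    (∑' i, w i * f i) ^ p ≤ (∑' i, w i) ^ (p - 1) * ∑' i, w i * f i ^ p := by
  have hp₀ : p ≠ 0 := (zero_lt_one.trans_le hp).ne'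
  calc (∑' i, w i * f i) ^ p
      ≤ ((∑' i, w i) ^ (1 - p⁻¹) * (∑' i, w i * f i ^ p) ^ p⁻¹) ^ p := by
        gcongr; exact inner_le_weight_mul_Lp_tsum hp w f
    _ = (∑' i, w i) ^ (p - 1) * ∑' i, w i * f i ^ p := by
        rw [mul_rpow_of_nonneg _ _ (zero_le_one.trans hp), ← rpow_mul, ← rpow_mul,
          inv_mul_cancel₀ hp₀, rpow_one, sub_mul, one_mul, inv_mul_cancel₀ hp₀]

theorem tsum_tsum_mul_add_le (w g : ℕ → ℝ≥0∞) :
    ∑' n, ∑' k, w k * g (n + k) ≤ (∑' k, w k) * ∑' n, g n := by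
  calc ∑' n, ∑' k, w k * g (n + k)
      = ∑' k, w k * ∑' n, g (n + k) := by
        rw [ENNReal.tsum_comm]; exact tsum_congr fun k => ENNReal.tsum_mul_left
    _ ≤ ∑' k, w k * ∑' n, g n := ENNReal.tsum_le_tsum fun k =>
        mul_le_mul_right (tsum_comp_le_tsum_of_injective (add_left_injective k) g) _
    _ = (∑' k, w k) * ∑' n, g n := ENNReal.tsum_mul_right

theorem tsum_rpow_tsum_mul_add_le {p : ℝ} (hp : 1 ≤ p) (w A : ℕ → ℝ≥0∞) :
    ∑' n, (∑' k, w k * A (n + k)) ^ p ≤ (∑' k, w k) ^ p * ∑' n, A n ^ p := by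
  calc ∑' n, (∑' k, w k * A (n + k)) ^ p
      ≤ ∑' n, (∑' k, w k) ^ (p - 1) * ∑' k, w k * A (n + k) ^ p :=
        ENNReal.tsum_le_tsum fun n => rpow_tsum_mul_le hp w (fun k => A (n + k))
    _ = (∑' k, w k) ^ (p - 1) * ∑' n, ∑' k, w k * A (n + k) ^ p := ENNReal.tsum_mul_left
    _ ≤ (∑' k, w k) ^ (p - 1) * ((∑' k, w k) * ∑' n, A n ^ p) := by
        gcongr; exact tsum_tsum_mul_add_le w fun n => A n ^ p
    _ = (∑' k, w k) ^ p * ∑' n, A n ^ p := by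
        have h := rpow_add_of_nonneg (x := ∑' k, w k) (p - 1) 1 (sub_nonneg.2 hp) zero_le_one
        rw [rpow_one, sub_add_cancel] at h
        rw [← mul_assoc, ← h]

end ENNReal

theorem Real.tsum_rpow_tsum_mul_add_le {p : ℝ} (hp : 1 ≤ p) {w A : ℕ → ℝ}
    (hw : ∀ k, 0 ≤ w k) (hA : ∀ n, 0 ≤ A n) (hws : Summable w)
    (hAs : Summable fun n => A n ^ p) :
    ∑' n, (∑' k, w k * A (n + k)) ^ p ≤ (∑' k, w k) ^ p * ∑' n, A n ^ p := by
  have hp₀ : 0 ≤ p := zero_le_one.trans hp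
  set W : ℕ → ℝ≥0∞ := fun k => ENNReal.ofReal (w k)
  set B : ℕ → ℝ≥0∞ := fun n => ENNReal.ofReal (A n)
  have hBp : ∀ n, B n ^ p = ENNReal.ofReal (A n ^ p) := fun n =>
    ENNReal.ofReal_rpow_of_nonneg (hA n) hp₀
  have hWsum : ∑' k, W k = ENNReal.ofReal (∑' k, w k) :=
    (ENNReal.ofReal_tsum_of_nonneg hw hws).symm
  have hBsum : ∑' n, B n ^ p = ENNReal.ofReal (∑' n, A n ^ p) := by
    simp_rw [hBp]
    exact (ENNReal.ofReal_tsum_of_nonneg (fun n => Real.rpow_nonneg (hA n) p) hAs).symm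
  have hbound : (∑' k, W k) ^ p * ∑' n, B n ^ p ≠ ⊤ := by
    rw [hWsum, hBsum]
    exact ENNReal.mul_ne_top (ENNReal.rpow_ne_top_of_nonneg hp₀ ENNReal.ofReal_ne_top)
      ENNReal.ofReal_ne_top
  have key := ENNReal.tsum_rpow_tsum_mul_add_le hp W B
  have htail : ∀ n, ∑' k, w k * A (n + k) = (∑' k, W k * B (n + k)).toReal := fun n => by
    rw [ENNReal.tsum_toReal_eq fun k => ENNReal.mul_ne_top ENNReal.ofReal_ne_top
      ENNReal.ofReal_ne_top]
    simp only [ENNReal.toReal_mul, ENNReal.toReal_ofReal (hw _), ENNReal.toReal_ofReal (hA _)]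
  calc ∑' n, (∑' k, w k * A (n + k)) ^ p
      = (∑' n, (∑' k, W k * B (n + k)) ^ p).toReal := by
        rw [ENNReal.tsum_toReal_eq
          (ENNReal.ne_top_of_tsum_ne_top (ne_top_of_le_ne_top hbound key))]
        simp only [htail, ENNReal.toReal_rpow]
    _ ≤ ((∑' k, W k) ^ p * ∑' n, B n ^ p).toReal := ENNReal.toReal_mono hbound key
    _ = (∑' k, w k) ^ p * ∑' n, A n ^ p := by
        rw [ENNReal.toReal_mul, ← ENNReal.toReal_rpow, hWsum, hBsum,
          ENNReal.toReal_ofReal (tsum_nonneg hw),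
          ENNReal.toReal_ofReal (tsum_nonneg fun n => Real.rpow_nonneg (hA n) p)]

/-- Discrete dual Hardy inequality: for `0 < q < 1`, `p > 1` and a positive
sequence `(a_n)_{n ≥ 1}` (represented by `fun n => a (n+1)`) with `∑ aₙ^p < ∞`,
`∑_{n=1}^∞ (q^{-n} ∑_{k=n}^∞ q^k a_k)^p ≤ (1-q)^{-p} ∑ aₙ^p`. -/
theorem hardy_q_discrete (q p : ℝ) (hq0 : 0 < q) (hq1 : q < 1) (hp : 1 < p)
    (a : ℕ → ℝ) (ha : ∀ n : ℕ, 0 < a (n + 1))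
    (hap : Summable fun n : ℕ => a (n + 1) ^ p) :
    ∑' n : ℕ, ((q ^ (n + 1))⁻¹ * ∑' k : ℕ, q ^ (n + 1 + k) * a (n + 1 + k)) ^ p ≤
      ((1 - q)⁻¹) ^ p * ∑' n : ℕ, a (n + 1) ^ p := by
  have htail : ∀ n : ℕ, (q ^ (n + 1))⁻¹ * ∑' k : ℕ, q ^ (n + 1 + k) * a (n + 1 + k) =
      ∑' k : ℕ, q ^ k * a (n + k + 1) := fun n => by
    simp_rw [pow_add q (n + 1), mul_assoc, tsum_mul_left, add_right_comm n 1]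
    exact inv_mul_cancel_left₀ (pow_ne_zero _ hq0.ne') _
  simp_rw [htail, ← tsum_geometric_of_lt_one hq0.le hq1]
  exact Real.tsum_rpow_tsum_mul_add_le hp.le (fun k => pow_nonneg hq0.le k) (fun n => (ha n).le)
    (summable_geometric_of_lt_one hq0.le hq1) hap
end

section
/- Let 0 < q < 1 and p > 1. The constant (1-q)^{-p} in the inequality ∑_{n=1}^∞ ( q^{-n} ∑_{k=n}^∞ q^k a_k )^p ≤ C ∑_{n=1}^∞ a_n^p is best possible: for every C < (1-q)^{-p} there exists a nonnegative sequence (a_n) with 0 < ∑ a_n^p < ∞ such that ∑_{n=1}^∞ ( q^{-n} ∑_{k=n}^∞ q^k a_k )^p > C ∑_{n=1}^∞ a_n^p. -/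
open Filter Topology Set

/-! The geometric sequence `aₙ = tⁿ` is an eigenvector of the dual Hardy operator
`a ↦ (q⁻ⁿ ∑_{k ≥ n} qᵏ aₖ)ₙ` with eigenvalue `(1 - q t)⁻¹`; for `0 < t < 1` it lies in `ℓᵖ`, so the
best constant is at least `(1 - q t)^{-p}`, which tends to `(1 - q)^{-p}` as `t → 1⁻`. -/

lemma inv_pow_mul_tsum_pow_mul_pow {q t : ℝ} (hq : q ≠ 0) (hqt : |q * t| < 1) (m : ℕ) :
    (q ^ m)⁻¹ * ∑' k : ℕ, q ^ (m + k) * t ^ (m + k) = (1 - q * t)⁻¹ * t ^ m := by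
  simp_rw [← mul_pow, pow_add, tsum_mul_left, tsum_geometric_of_abs_lt_one hqt, mul_pow]
  field_simp

lemma summable_pow_rpow {t p : ℝ} (ht0 : 0 ≤ t) (ht1 : t < 1) (hp : 0 < p) :
    Summable fun n : ℕ => (t ^ n) ^ p := by
  simp_rw [← Real.rpow_pow_comm ht0]
  exact summable_geometric_of_lt_one (by positivity) (Real.rpow_lt_one ht0 ht1 hp)

lemma exists_mem_Ioo_lt_inv_one_sub_mul_rpow {q p C : ℝ} (hq : q < 1)
    (hC : C < ((1 - q)⁻¹) ^ p) : ∃ t ∈ Ioo (0 : ℝ) 1, C < ((1 - q * t)⁻¹) ^ p := by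
  have hcont : ContinuousAt (fun t : ℝ => ((1 - q * t)⁻¹) ^ p) 1 := by
    have hbase : 0 < 1 - q * 1 := by linarith
    exact ((continuousAt_const.sub (continuousAt_const.mul continuousAt_id)).inv₀
      hbase.ne').rpow_const (Or.inl (inv_pos.2 hbase).ne')
  have hlim : Tendsto (fun t : ℝ => ((1 - q * t)⁻¹) ^ p) (𝓝[<] 1) (𝓝 (((1 - q)⁻¹) ^ p)) := by
    simpa using hcont.tendsto.mono_left nhdsWithin_le_nhds
  have hIoo : ∀ᶠ t in 𝓝[<] (1 : ℝ), t ∈ Ioo (0 : ℝ) 1 :=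
    Ioo_mem_nhdsLT (by norm_num)
  exact (hIoo.and (hlim.eventually (eventually_gt_nhds hC))).exists

/-- Sharpness of the constant `(1-q)^{-p}` in the discrete dual Hardy inequality:
for every `C < (1-q)^{-p}` there is a nonnegative sequence `(a_n)_{n ≥ 1}`
(represented by `fun n => a (n+1)`) with `0 < ∑ aₙ^p < ∞` for which the
inequality with constant `C` fails. -/
theorem hardy_q_discrete_sharp (q p : ℝ) (hq0 : 0 < q) (hq1 : q < 1) (hp : 1 < p)
    (C : ℝ) (hC : C < ((1 - q)⁻¹) ^ p) :
    ∃ a : ℕ → ℝ, (∀ n : ℕ, 0 ≤ a (n + 1)) ∧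
      (Summable fun n : ℕ => a (n + 1) ^ p) ∧
      0 < ∑' n : ℕ, a (n + 1) ^ p ∧
      C * ∑' n : ℕ, a (n + 1) ^ p <
        ∑' n : ℕ, ((q ^ (n + 1))⁻¹ * ∑' k : ℕ, q ^ (n + 1 + k) * a (n + 1 + k)) ^ p := by
  obtain ⟨t, ⟨ht0, ht1⟩, hCt⟩ := exists_mem_Ioo_lt_inv_one_sub_mul_rpow hq1 hC
  have hqt : q * t < 1 := by nlinarith
  have hS : Summable fun n : ℕ => (t ^ (n + 1)) ^ p :=
    (summable_nat_add_iff 1).2 (summable_pow_rpow ht0.le ht1 (by linarith))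
  have hSpos : 0 < ∑' n : ℕ, (t ^ (n + 1)) ^ p :=
    hS.tsum_pos (fun n => by positivity) 0 (by positivity)
  refine ⟨fun n => t ^ n, fun n => by positivity, hS, hSpos, ?_⟩
  have hinv : 0 ≤ (1 - q * t)⁻¹ := inv_nonneg.2 (by linarith)
  simp_rw [inv_pow_mul_tsum_pow_mul_pow hq0.ne' (abs_lt.2 ⟨by nlinarith, hqt⟩),
    Real.mul_rpow hinv (pow_nonneg ht0.le _), tsum_mul_left]
  exact mul_lt_mul_of_pos_right hCt hSpos
end

section
/- Let p > 1 and let (a_n)_{n≥1} be nonnegative reals with a_1 > 0 and S = ∑_{n=1}^∞ a_n < ∞. Define A x (i) = ∑_{j=i}^∞ a_{j-i+1} x_j. Then the constant S is sharp: for every ε > 0 there exists a nonnegative sequence x with 0 < ∑ x_j^p < ∞ such that ( ∑_i (A x (i))^p )^{1/p} > (S - ε) ( ∑_j x_j^p )^{1/p}. -/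
/-!
Test `A` on the indicator of `{1, …, M}`. Its `p`-norm is `M ^ (1/p)`, while row `i ≤ M` of the
image is the partial sum `a_1 + ⋯ + a_{M-i+1}`, so `‖A x‖_p ^ p` is the sum of the `p`-th powers
of the first `M` partial sums of `∑ a_n`. These tend to `S ^ p`, hence so does their Cesàro mean,
and `‖A x‖_p / ‖x‖_p → S` as `M → ∞`.
-/

open Finset Filter Topology

lemma hasSum_ite_lt {α : Type*} [AddCommMonoid α] [TopologicalSpace α] (f : ℕ → α) (M : ℕ) :
    HasSum (fun d => if d < M then f d else 0) (∑ d ∈ range M, f d) := by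
  have h : HasSum (fun d => if d < M then f d else 0) (∑ d ∈ range M, if d < M then f d else 0) :=
    hasSum_sum_of_ne_finset_zero fun d hd => if_neg (mem_range.not.1 hd)
  rwa [sum_congr rfl fun d hd => if_pos (mem_range.1 hd)] at h

lemma tsum_mul_ite_add_le (a : ℕ → ℝ) (i M : ℕ) :
    ∑' d : ℕ, a (d + 1) * (if i + 1 + d ≤ M then 1 else 0) = ∑ d ∈ range (M - i), a (d + 1) := by
  have hrow : ∀ d, a (d + 1) * (if i + 1 + d ≤ M then 1 else 0)
      = if d < M - i then a (d + 1) else 0 := by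
    intro d
    split_ifs <;> first | omega | simp
  simp_rw [hrow]
  exact (hasSum_ite_lt _ _).tsum_eq

lemma tsum_comp_tsub_eq_sum_range {α : Type*} [AddCommMonoid α] [TopologicalSpace α]
    (g : ℕ → α) (hg : g 0 = 0) (M : ℕ) :
    ∑' i : ℕ, g (M - i) = ∑ k ∈ range M, g (k + 1) := by
  rw [tsum_eq_sum (s := range M) fun i hi => by rw [Nat.sub_eq_zero_of_le (by simpa using hi), hg],
    ← sum_range_reflect]
  exact sum_congr rfl fun i hi => by rw [mem_range] at hi; congr 1; omega

lemma eventually_mul_rpow_lt_rpow_sum_rpow {u : ℕ → ℝ} {L c p : ℝ} (hu : ∀ k, 0 ≤ u k)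
    (hp : 0 < p) (hlim : Tendsto u atTop (𝓝 L)) (hc : c < L) :
    ∀ᶠ n : ℕ in atTop, c * (n : ℝ) ^ (1 / p) < (∑ k ∈ range n, u k ^ p) ^ (1 / p) := by
  have hL : 0 ≤ L := ge_of_tendsto' hlim hu
  have hmean : Tendsto (fun n : ℕ => ((n : ℝ)⁻¹ * ∑ k ∈ range n, u k ^ p) ^ (1 / p))
      atTop (𝓝 L) := by
    have := ((hlim.rpow_const (Or.inr hp.le)).cesaro).rpow_const (p := 1 / p)
      (Or.inr (by positivity))
    rwa [← Real.rpow_mul hL, mul_one_div_cancel hp.ne', Real.rpow_one] at this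
  filter_upwards [hmean.eventually (lt_mem_nhds hc), eventually_gt_atTop 0] with n hn hn0
  have hn0' : (0 : ℝ) < n := by exact_mod_cast hn0
  have hsum : 0 ≤ ∑ k ∈ range n, u k ^ p := sum_nonneg fun k _ => Real.rpow_nonneg (hu k) p
  calc c * (n : ℝ) ^ (1 / p)
      < ((n : ℝ)⁻¹ * ∑ k ∈ range n, u k ^ p) ^ (1 / p) * (n : ℝ) ^ (1 / p) :=
        mul_lt_mul_of_pos_right hn (by positivity)
    _ = (∑ k ∈ range n, u k ^ p) ^ (1 / p) := by
        rw [mul_comm, ← Real.mul_rpow hn0'.le (by positivity), mul_inv_cancel_left₀ hn0'.ne']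

theorem toeplitz_sharp_general (p : ℝ) (hp : 1 < p)
    (a : ℕ → ℝ) (ha : ∀ n : ℕ, 0 ≤ a (n + 1))
    (hsum : Summable fun n : ℕ => a (n + 1)) (S : ℝ) (hS : S = ∑' n : ℕ, a (n + 1))
    (ε : ℝ) (hε : 0 < ε) :
    ∃ x : ℕ → ℝ, (∀ j : ℕ, 0 ≤ x (j + 1)) ∧
      (Summable fun j : ℕ => x (j + 1) ^ p) ∧
      0 < ∑' j : ℕ, x (j + 1) ^ p ∧
      (S - ε) * (∑' j : ℕ, x (j + 1) ^ p) ^ (1 / p) <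
        (∑' i : ℕ, (∑' d : ℕ, a (d + 1) * x (i + 1 + d)) ^ p) ^ (1 / p) := by
  have hp0 : 0 < p := by linarith
  have hpartial : Tendsto (fun k => ∑ d ∈ range (k + 1), a (d + 1)) atTop (𝓝 S) :=
    hS ▸ hsum.hasSum.tendsto_sum_nat.comp (tendsto_add_atTop_nat 1)
  obtain ⟨M, hM, hM1⟩ := ((eventually_mul_rpow_lt_rpow_sum_rpow
    (fun k => sum_nonneg fun d _ => ha d) hp0 hpartial (by linarith : S - ε < S)).and
    (eventually_ge_atTop 1)).exists
  have hnorm : HasSum (fun j : ℕ => (if j + 1 ≤ M then (1 : ℝ) else 0) ^ p) M := by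
    convert hasSum_ite_lt (fun _ => (1 : ℝ)) M using 1
    · ext j
      split_ifs <;> first | omega | simp [hp0.ne']
    · simp
  refine ⟨fun j => if j ≤ M then 1 else 0, fun j => by positivity, hnorm.summable,
    by rw [hnorm.tsum_eq]; positivity, ?_⟩
  simp only [hnorm.tsum_eq, tsum_mul_ite_add_le]
  rwa [tsum_comp_tsub_eq_sum_range (fun k => (∑ d ∈ range k, a (d + 1)) ^ p)
    (by simp [hp0.ne'])]

/-- Sharpness of the constant `S` for the upper triangular Toeplitz operator
`(A x)_i = ∑_{j ≥ i} a_{j-i+1} x_j` (row `i+1` is `∑' d, a (d+1) * x (i+1+d)`):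
for every `ε > 0` there is a nonnegative sequence `x` with `0 < ∑ x_j^p < ∞` and
`(∑_i (A x)_i^p)^{1/p} > (S - ε) (∑_j x_j^p)^{1/p}`. -/
theorem toeplitz_sharp (p : ℝ) (hp : 1 < p)
    (a : ℕ → ℝ) (ha : ∀ n : ℕ, 0 ≤ a (n + 1)) (ha1 : 0 < a 1)
    (hsum : Summable fun n : ℕ => a (n + 1)) (S : ℝ) (hS : S = ∑' n : ℕ, a (n + 1))
    (ε : ℝ) (hε : 0 < ε) :
    ∃ x : ℕ → ℝ, (∀ j : ℕ, 0 ≤ x (j + 1)) ∧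
      (Summable fun j : ℕ => x (j + 1) ^ p) ∧
      0 < ∑' j : ℕ, x (j + 1) ^ p ∧
      (S - ε) * (∑' j : ℕ, x (j + 1) ^ p) ^ (1 / p) <
        (∑' i : ℕ, (∑' d : ℕ, a (d + 1) * x (i + 1 + d)) ^ p) ^ (1 / p) :=
  toeplitz_sharp_general p hp a ha hsum S hS ε hε
end

section
/- Let 0 < q < 1, p ≥ 1, and α < 1 - 1/p. For a nonnegative function f on [0,1), define the q-Jackson integral ∫₀^x f(t) d_q t = (1-q) x ∑_{k=0}^∞ q^k f(q^k x). Then ∫₀^1 x^{p(α-1)} ( ∫₀^x t^{-α} f(t) d_q t )^p d_q x ≤ [1 - 1/p - α]_q^{-p} ∫₀^1 f(t)^p d_q t, where [β]_q = (1 - q^β)/(1 - q), provided the right-hand side is finite. -/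
/-!
With `a = q ^ (1 - 1/p - α) < 1`, the Jackson sums turn the inequality into a discrete Hardy
inequality with geometric kernel: `∑ₘ qᵐ (∑ₖ aᵏ q^{k/p} f(k+m))ᵖ ≤ (1-a)⁻ᵖ ∑ₙ qⁿ f(n)ᵖ`.
Hölder's inequality against the weights `aᵏ`, whose total mass is `(1-a)⁻¹`, bounds the inner
`p`-th power by `(1-a)^{1-p} ∑ₖ aᵏ qᵏ f(k+m)ᵖ`; interchanging the two sums and shifting the
index costs one more factor `(1-a)⁻¹`.
-/

open scoped ENNReal
open MeasureTheory

namespace ENNReal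

theorem inner_le_Lp_mul_Lq_tsum {ι : Type*} {p r : ℝ} (hpr : p.HolderConjugate r)
    (u v : ι → ℝ≥0∞) :
    ∑' i, u i * v i ≤ (∑' i, u i ^ p) ^ (1 / p) * (∑' i, v i ^ r) ^ (1 / r) := by
  let _ : MeasurableSpace ι := ⊤
  simpa only [Pi.mul_apply, lintegral_count] using
    lintegral_mul_le_Lp_mul_Lq Measure.count hpr (Measurable.of_discrete (f := u)).aemeasurable
      Measurable.of_discrete.aemeasurable

theorem rpow_tsum_geometric_mul_le {p : ℝ} (hp : 1 ≤ p) (a : ℝ≥0∞) (g : ℕ → ℝ≥0∞) :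
    (∑' k, a ^ k * g k) ^ p ≤ (1 - a)⁻¹ ^ (p - 1) * ∑' k, a ^ k * g k ^ p := by
  obtain rfl | hp1 := hp.eq_or_lt
  · simp
  have hp0 : p ≠ 0 := by positivity
  have holder := inner_le_Lp_mul_Lq_tsum (Real.HolderConjugate.conjExponent hp1).symm
    (fun k => (a ^ k) ^ ((p - 1) / p)) (fun k => (a ^ k) ^ (1 / p) * g k)
  have split : ∀ k, (a ^ k) ^ ((p - 1) / p) * ((a ^ k) ^ (1 / p) * g k) = a ^ k * g k := by
    intro k
    rw [← mul_assoc, ← rpow_add_of_nonneg _ _ (by positivity) (by positivity),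
      show (p - 1) / p + 1 / p = 1 by field_simp; ring, rpow_one]
  have left : ∀ k, ((a ^ k) ^ ((p - 1) / p)) ^ p.conjExponent = a ^ k := by
    intro k
    rw [← rpow_mul, Real.conjExponent]
    field_simp
    simp
  have right : ∀ k, ((a ^ k) ^ (1 / p) * g k) ^ p = a ^ k * g k ^ p := by
    intro k
    rw [mul_rpow_of_nonneg _ _ (by positivity), ← rpow_mul, one_div_mul_cancel hp0, rpow_one]
  simp only [split, left, right, tsum_geometric] at holder
  calc (∑' k, a ^ k * g k) ^ p
      ≤ ((1 - a)⁻¹ ^ (1 / p.conjExponent) * (∑' k, a ^ k * g k ^ p) ^ (1 / p)) ^ p :=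
        rpow_le_rpow holder (by positivity)
    _ = (1 - a)⁻¹ ^ (p - 1) * ∑' k, a ^ k * g k ^ p := by
        rw [mul_rpow_of_nonneg _ _ (by positivity), ← rpow_mul, ← rpow_mul,
          one_div_mul_cancel hp0, rpow_one, Real.conjExponent]
        congr 2
        field_simp

theorem tsum_tsum_geometric_mul_add_le (a : ℝ≥0∞) (u : ℕ → ℝ≥0∞) :
    ∑' m, ∑' k, a ^ k * u (k + m) ≤ (1 - a)⁻¹ * ∑' n, u n :=
  calc ∑' m, ∑' k, a ^ k * u (k + m)
      = ∑' k, a ^ k * ∑' m, u (k + m) := by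
        rw [ENNReal.tsum_comm]
        exact tsum_congr fun k => ENNReal.tsum_mul_left
    _ ≤ ∑' k, a ^ k * ∑' n, u n :=
        ENNReal.tsum_le_tsum fun k =>
          mul_le_mul_right (tsum_comp_le_tsum_of_injective (add_right_injective k) u) _
    _ = (1 - a)⁻¹ * ∑' n, u n := by rw [ENNReal.tsum_mul_right, tsum_geometric]

theorem tsum_pow_mul_rpow_tsum_geometric_le {p : ℝ} (hp : 1 ≤ p) (a Q : ℝ≥0∞)
    (f : ℕ → ℝ≥0∞) :
    ∑' m, Q ^ m * (∑' k, a ^ k * ((Q ^ k) ^ p⁻¹ * f (k + m))) ^ p ≤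
      (1 - a)⁻¹ ^ p * ∑' n, Q ^ n * f n ^ p := by
  have hp0 : p ≠ 0 := by positivity
  have power : ∀ k m, ((Q ^ k) ^ p⁻¹ * f (k + m)) ^ p = Q ^ k * f (k + m) ^ p := fun k m => by
    rw [mul_rpow_of_nonneg _ _ (by positivity), rpow_inv_rpow hp0]
  calc ∑' m, Q ^ m * (∑' k, a ^ k * ((Q ^ k) ^ p⁻¹ * f (k + m))) ^ p
      ≤ ∑' m, Q ^ m * ((1 - a)⁻¹ ^ (p - 1) * ∑' k, a ^ k * (Q ^ k * f (k + m) ^ p)) := by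
        gcongr with m
        simpa only [power] using
          rpow_tsum_geometric_mul_le hp a fun k => (Q ^ k) ^ p⁻¹ * f (k + m)
    _ = (1 - a)⁻¹ ^ (p - 1) * ∑' m, ∑' k, a ^ k * (Q ^ (k + m) * f (k + m) ^ p) := by
        rw [← ENNReal.tsum_mul_left]
        refine tsum_congr fun m => ?_
        rw [← ENNReal.tsum_mul_left, ← ENNReal.tsum_mul_left, ← ENNReal.tsum_mul_left]
        exact tsum_congr fun k => by ring
    _ ≤ (1 - a)⁻¹ ^ (p - 1) * ((1 - a)⁻¹ * ∑' n, Q ^ n * f n ^ p) := by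
        gcongr
        exact tsum_tsum_geometric_mul_add_le a fun n => Q ^ n * f n ^ p
    _ = (1 - a)⁻¹ ^ p * ∑' n, Q ^ n * f n ^ p := by
        rw [← mul_assoc]
        congr 1
        calc (1 - a)⁻¹ ^ (p - 1) * (1 - a)⁻¹ = (1 - a)⁻¹ ^ (p - 1) * (1 - a)⁻¹ ^ (1 : ℝ) := by
              rw [rpow_one]
          _ = (1 - a)⁻¹ ^ p := by
              rw [← rpow_add_of_nonneg _ _ (by linarith) zero_le_one, sub_add_cancel]

end ENNReal

theorem ofReal_pow_mul_ofReal_rpow_pow_add {q : ℝ} (hq : 0 < q) (p α : ℝ) (k m : ℕ) :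
    ENNReal.ofReal (q ^ k) * ENNReal.ofReal ((q ^ (k + m)) ^ (-α)) =
      ENNReal.ofReal ((q ^ m) ^ (-α)) *
        (ENNReal.ofReal (q ^ (1 - 1 / p - α)) ^ k * (ENNReal.ofReal q ^ k) ^ p⁻¹) := by
  have real : q ^ k * (q ^ (k + m)) ^ (-α) =
      (q ^ m) ^ (-α) * ((q ^ (1 - 1 / p - α)) ^ k * (q ^ k) ^ p⁻¹) := by
    simp only [← Real.rpow_natCast, ← Real.rpow_mul hq.le, ← Real.rpow_add hq]
    congr 1
    push_cast
    ring
  rw [← ENNReal.ofReal_pow hq.le, ← ENNReal.ofReal_pow (by positivity),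
    ENNReal.ofReal_rpow_of_pos (by positivity), ← ENNReal.ofReal_mul (by positivity),
    ← ENNReal.ofReal_mul (by positivity), ← ENNReal.ofReal_mul (by positivity), real]

theorem ofReal_mul_ofReal_rpow_mul_rpow {x : ℝ} (hx : 0 < x) {p : ℝ} (hp : 0 ≤ p) (α c : ℝ)
    (S : ℝ≥0∞) :
    ENNReal.ofReal x * ENNReal.ofReal (x ^ (p * (α - 1))) *
        (ENNReal.ofReal (c * x) * (ENNReal.ofReal (x ^ (-α)) * S)) ^ p =
      ENNReal.ofReal c ^ p * (ENNReal.ofReal x * S ^ p) := by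
  have real : x ^ (p * (α - 1)) * x ^ p * (x ^ (-α)) ^ p = 1 := by
    rw [← Real.rpow_mul hx.le, ← Real.rpow_add hx, ← Real.rpow_add hx]
    ring_nf
    exact Real.rpow_zero x
  have cancel := congrArg ENNReal.ofReal real
  rw [ENNReal.ofReal_mul (by positivity), ENNReal.ofReal_mul (by positivity), ENNReal.ofReal_one,
    ← ENNReal.ofReal_rpow_of_nonneg hx.le hp,
    ← ENNReal.ofReal_rpow_of_nonneg (by positivity) hp] at cancel
  rw [ENNReal.ofReal_mul' hx.le, ENNReal.mul_rpow_of_nonneg _ _ hp,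
    ENNReal.mul_rpow_of_nonneg _ _ hp, ENNReal.mul_rpow_of_nonneg _ _ hp]
  calc _ = ENNReal.ofReal c ^ p * (ENNReal.ofReal x * S ^ p) *
        (ENNReal.ofReal (x ^ (p * (α - 1))) * ENNReal.ofReal x ^ p *
          ENNReal.ofReal (x ^ (-α)) ^ p) := by ring
    _ = _ := by rw [cancel, mul_one]

theorem hardy_q_integral_general (q p α : ℝ) (hq0 : 0 < q) (hq1 : q < 1) (hp : 1 ≤ p)
    (hα : α < 1 - 1 / p) (f : ℕ → ℝ≥0∞) :
    ENNReal.ofReal (1 - q) *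
        ∑' m : ℕ, ENNReal.ofReal (q ^ m) * ENNReal.ofReal ((q ^ m) ^ (p * (α - 1))) *
          (ENNReal.ofReal ((1 - q) * q ^ m) *
              ∑' k : ℕ, ENNReal.ofReal (q ^ k) * ENNReal.ofReal ((q ^ (k + m)) ^ (-α)) *
                f (k + m)) ^ p ≤
      ENNReal.ofReal ((((1 : ℝ) - q ^ (1 - 1 / p - α)) / (1 - q))⁻¹ ^ p) *
        (ENNReal.ofReal (1 - q) * ∑' k : ℕ, ENNReal.ofReal (q ^ k) * f k ^ p) := by
  have hp0 : 0 ≤ p := by linarith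
  set Q := ENNReal.ofReal q
  set a := ENNReal.ofReal (q ^ (1 - 1 / p - α))
  have hconst : ENNReal.ofReal ((((1 : ℝ) - q ^ (1 - 1 / p - α)) / (1 - q))⁻¹ ^ p) =
      ENNReal.ofReal (1 - q) ^ p * (1 - a)⁻¹ ^ p := by
    have ha1 : q ^ (1 - 1 / p - α) < 1 := Real.rpow_lt_one hq0.le hq1 (by linarith)
    rw [inv_div, ← ENNReal.ofReal_rpow_of_nonneg (by bound) hp0,
      ENNReal.ofReal_div_of_pos (by linarith),
      ENNReal.ofReal_sub 1 (Real.rpow_nonneg hq0.le (1 - 1 / p - α)),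
      ENNReal.ofReal_one, div_eq_mul_inv, ENNReal.mul_rpow_of_nonneg _ _ hp0]
  have hterm : ∀ m : ℕ,
      ENNReal.ofReal (q ^ m) * ENNReal.ofReal ((q ^ m) ^ (p * (α - 1))) *
          (ENNReal.ofReal ((1 - q) * q ^ m) *
            ∑' k : ℕ, ENNReal.ofReal (q ^ k) * ENNReal.ofReal ((q ^ (k + m)) ^ (-α)) *
              f (k + m)) ^ p =
        ENNReal.ofReal (1 - q) ^ p *
          (Q ^ m * (∑' k, a ^ k * ((Q ^ k) ^ p⁻¹ * f (k + m))) ^ p) := by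
    intro m
    have inner : ∑' k : ℕ, ENNReal.ofReal (q ^ k) * ENNReal.ofReal ((q ^ (k + m)) ^ (-α)) *
          f (k + m) =
        ENNReal.ofReal ((q ^ m) ^ (-α)) * ∑' k, a ^ k * ((Q ^ k) ^ p⁻¹ * f (k + m)) := by
      rw [← ENNReal.tsum_mul_left]
      refine tsum_congr fun k => ?_
      rw [ofReal_pow_mul_ofReal_rpow_pow_add hq0 p α k m]
      ring
    rw [inner, ofReal_mul_ofReal_rpow_mul_rpow (pow_pos hq0 m) hp0, ENNReal.ofReal_pow hq0.le]
  calc _ = ENNReal.ofReal (1 - q) * (ENNReal.ofReal (1 - q) ^ p *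
          ∑' m, Q ^ m * (∑' k, a ^ k * ((Q ^ k) ^ p⁻¹ * f (k + m))) ^ p) := by
        rw [tsum_congr hterm, ENNReal.tsum_mul_left]
    _ ≤ ENNReal.ofReal (1 - q) * (ENNReal.ofReal (1 - q) ^ p *
          ((1 - a)⁻¹ ^ p * ∑' n, Q ^ n * f n ^ p)) := by
        gcongr
        exact ENNReal.tsum_pow_mul_rpow_tsum_geometric_le hp a Q f
    _ = _ := by
        simp only [hconst, ENNReal.ofReal_pow hq0.le]
        ring

/-- Hardy `q`-inequality (Maligranda–Oinarov–Persson): with `0 < q < 1`, `p ≥ 1`,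
`α < 1 - 1/p`, and a nonnegative `f` on `[0,1)` represented by its values
`f k = f(q^k)` at the points `q^k`, the `q`-Jackson integral inequality
`∫₀¹ x^{p(α-1)} (∫₀ˣ t^{-α} f dqt)^p dqx ≤ [1-1/p-α]_q^{-p} ∫₀¹ f^p dqt`
holds, provided the right-hand side is finite. -/
theorem hardy_q_integral (q p α : ℝ) (hq0 : 0 < q) (hq1 : q < 1) (hp : 1 ≤ p)
    (hα : α < 1 - 1 / p) (f : ℕ → ℝ≥0∞)
    (hfin : ENNReal.ofReal (1 - q) * ∑' k : ℕ, ENNReal.ofReal (q ^ k) * f k ^ p < ⊤) :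
    ENNReal.ofReal (1 - q) *
        ∑' m : ℕ, ENNReal.ofReal (q ^ m) * ENNReal.ofReal ((q ^ m) ^ (p * (α - 1))) *
          (ENNReal.ofReal ((1 - q) * q ^ m) *
              ∑' k : ℕ, ENNReal.ofReal (q ^ k) * ENNReal.ofReal ((q ^ (k + m)) ^ (-α)) *
                f (k + m)) ^ p ≤
      ENNReal.ofReal ((((1 : ℝ) - q ^ (1 - 1 / p - α)) / (1 - q))⁻¹ ^ p) *
        (ENNReal.ofReal (1 - q) * ∑' k : ℕ, ENNReal.ofReal (q ^ k) * f k ^ p) :=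
  hardy_q_integral_general q p α hq0 hq1 hp hα f
end

section
/- Let 0 < q < 1, p ≥ 1, and α < 1 - 1/p. The constant [1 - 1/p - α]_q^{-p} in the q-Hardy inequality ∫₀^1 x^{p(α-1)} ( ∫₀^x t^{-α} f(t) d_q t )^p d_q x ≤ C ∫₀^1 f(t)^p d_q t is best possible: no constant C < [1 - 1/p - α]_q^{-p} works for all nonnegative f with finite ∫₀^1 f^p d_q t. -/
/-!
Powers are eigenfunctions of the weighted `q`-Hardy operator: for `f(x) = x^c`,
`x^(p(α-1)) (∫₀ˣ t^(-α) f(t) d_qt)^p = [c-α+1]_q^(-p) f(x)^p` pointwise, while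
`∫₀¹ f^p d_qt = 1/[cp+1]_q` is finite as soon as `c > -1/p`. Letting `c ↓ -1/p`, the eigenvalue
tends to `[1-1/p-α]_q^(-p)` by continuity, so every smaller constant is beaten by some power.
-/

open scoped ENNReal

noncomputable def qNumber (q β : ℝ) : ℝ := (1 - q ^ β) / (1 - q)

section

variable {q : ℝ}

lemma qNumber_pos (hq0 : 0 ≤ q) (hq1 : q < 1) {β : ℝ} (hβ : 0 < β) : 0 < qNumber q β :=
  div_pos (sub_pos.2 (Real.rpow_lt_one hq0 hq1 hβ)) (sub_pos.2 hq1)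

lemma continuous_qNumber (hq0 : q ≠ 0) : Continuous (qNumber q) :=
  (continuous_const.sub (Real.continuous_const_rpow hq0)).div_const _

lemma exists_gt_lt_qNumber_inv_rpow (hq0 : 0 < q) (hq1 : q < 1) {β₀ p C : ℝ} (hβ₀ : 0 < β₀)
    (hp : 0 ≤ p) (hC : C < (qNumber q β₀)⁻¹ ^ p) :
    ∃ β, β₀ < β ∧ C < (qNumber q β)⁻¹ ^ p := by
  have hcont : ContinuousAt (fun β => (qNumber q β)⁻¹ ^ p) β₀ :=
    ((continuous_qNumber hq0.ne').continuousAt.inv₀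
      (qNumber_pos hq0.le hq1 hβ₀).ne').rpow_const (Or.inr hp)
  obtain ⟨β, hCβ, hβ⟩ := (((hcont.eventually_const_lt hC).filter_mono nhdsWithin_le_nhds).and
    (self_mem_nhdsWithin (s := Set.Ioi β₀))).exists
  exact ⟨β, hβ, hCβ⟩

lemma hasSum_pow_mul_rpow_pow_add (hq0 : 0 < q) (hq1 : q < 1) {β : ℝ} (hβ : 0 < β + 1)
    (m : ℕ) :
    HasSum (fun k : ℕ => q ^ k * (q ^ (k + m)) ^ β) ((q ^ m) ^ β / (1 - q ^ (β + 1))) := by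
  have hterm : ∀ k : ℕ, q ^ k * (q ^ (k + m)) ^ β = (q ^ m) ^ β * (q ^ (β + 1)) ^ k := by
    intro k
    rw [pow_add, Real.mul_rpow (by positivity) (by positivity), ← Real.rpow_pow_comm hq0.le,
      Real.rpow_add_one hq0.ne', mul_pow]
    ring
  simp_rw [hterm, div_eq_mul_inv]
  exact (hasSum_geometric_of_lt_one (by positivity) (Real.rpow_lt_one hq0.le hq1 hβ)).mul_left _

-- `∫₀ˣ t^β d_qt = x^(β+1) / [β+1]_q` at `x = q^m`.
lemma jackson_integral_rpow (hq0 : 0 < q) (hq1 : q < 1) {β : ℝ} (hβ : 0 < β + 1) (m : ℕ) :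
    ENNReal.ofReal ((1 - q) * q ^ m) *
        ∑' k : ℕ, ENNReal.ofReal (q ^ k) * ENNReal.ofReal ((q ^ (k + m)) ^ β) =
      ENNReal.ofReal ((q ^ m) ^ (β + 1) / qNumber q (β + 1)) := by
  have hsum := hasSum_pow_mul_rpow_pow_add hq0 hq1 hβ m
  simp_rw [← ENNReal.ofReal_mul (pow_nonneg hq0.le _)]
  rw [← ENNReal.ofReal_tsum_of_nonneg (fun k => by positivity) hsum.summable, hsum.tsum_eq,
    ← ENNReal.ofReal_mul (mul_nonneg (sub_pos.2 hq1).le (by positivity))]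
  have h1q : (1:ℝ) - q ≠ 0 := (sub_pos.2 hq1).ne'
  have h1qβ : 1 - q ^ (β + 1) ≠ 0 := (sub_pos.2 (Real.rpow_lt_one hq0.le hq1 hβ)).ne'
  rw [qNumber, Real.rpow_add_one (pow_pos hq0 m).ne']
  field_simp

lemma rpow_mul_rpow_div_rpow {x : ℝ} (hx : 0 < x) {Q : ℝ} (hQ : 0 ≤ Q) (p α c : ℝ) :
    x ^ (p * (α - 1)) * (x ^ (c - α + 1) / Q) ^ p = Q⁻¹ ^ p * (x ^ c) ^ p := by
  rw [Real.div_rpow (by positivity) hQ, Real.inv_rpow hQ, ← Real.rpow_mul hx.le,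
    ← Real.rpow_mul hx.le, mul_div_assoc', ← Real.rpow_add hx]
  rw [show p * (α - 1) + (c - α + 1) * p = c * p by ring]
  ring

lemma jackson_integral_rpow_rpow (hq0 : 0 < q) (hq1 : q < 1) {p c : ℝ} (hp : 0 ≤ p)
    (hcp : 0 < c * p + 1) :
    ENNReal.ofReal (1 - q) *
        ∑' k : ℕ, ENNReal.ofReal (q ^ k) * ENNReal.ofReal ((q ^ k) ^ c) ^ p =
      ENNReal.ofReal (qNumber q (c * p + 1))⁻¹ := by
  have h := jackson_integral_rpow hq0 hq1 hcp 0
  simp only [add_zero, pow_zero, mul_one, Real.one_rpow, one_div] at h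
  rw [← h]
  congr 1
  refine tsum_congr fun k => ?_
  rw [ENNReal.ofReal_rpow_of_nonneg (by positivity) hp, ← Real.rpow_mul (by positivity)]

lemma q_hardy_rpow_eq (hq0 : 0 < q) (hq1 : q < 1) {p α c : ℝ} (hp : 0 ≤ p)
    (hc : 0 < c - α + 1) (m : ℕ) :
    ENNReal.ofReal (q ^ m) * ENNReal.ofReal ((q ^ m) ^ (p * (α - 1))) *
        (ENNReal.ofReal ((1 - q) * q ^ m) *
          ∑' k : ℕ, ENNReal.ofReal (q ^ k) * ENNReal.ofReal ((q ^ (k + m)) ^ (-α)) *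
            ENNReal.ofReal ((q ^ (k + m)) ^ c)) ^ p =
      ENNReal.ofReal ((qNumber q (c - α + 1))⁻¹ ^ p) *
        (ENNReal.ofReal (q ^ m) * ENNReal.ofReal ((q ^ m) ^ c) ^ p) := by
  have hmerge : ∀ k : ℕ, ENNReal.ofReal (q ^ k) * ENNReal.ofReal ((q ^ (k + m)) ^ (-α)) *
      ENNReal.ofReal ((q ^ (k + m)) ^ c) =
        ENNReal.ofReal (q ^ k) * ENNReal.ofReal ((q ^ (k + m)) ^ (c - α)) := by
    intro k
    rw [mul_assoc, ← ENNReal.ofReal_mul (by positivity), ← Real.rpow_add (by positivity),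
      neg_add_eq_sub]
  have hQ := (qNumber_pos hq0.le hq1 hc).le
  have hweight : ENNReal.ofReal ((q ^ m) ^ (p * (α - 1))) *
      ENNReal.ofReal ((q ^ m) ^ (c - α + 1) / qNumber q (c - α + 1)) ^ p =
        ENNReal.ofReal ((qNumber q (c - α + 1))⁻¹ ^ p) * ENNReal.ofReal ((q ^ m) ^ c) ^ p := by
    rw [ENNReal.ofReal_rpow_of_nonneg (by positivity) hp,
      ENNReal.ofReal_rpow_of_nonneg (by positivity) hp, ← ENNReal.ofReal_mul (by positivity),
      ← ENNReal.ofReal_mul (by positivity), rpow_mul_rpow_div_rpow (pow_pos hq0 m) hQ]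
  rw [mul_assoc, tsum_congr hmerge, jackson_integral_rpow hq0 hq1 hc m, hweight, mul_left_comm]

end

theorem hardy_q_integral_sharp_general (q p α : ℝ) (hq0 : 0 < q) (hq1 : q < 1) (hp : 1 ≤ p)
    (hα : α < 1 - 1 / p) (C : ℝ)
    (hC : C < (((1 : ℝ) - q ^ (1 - 1 / p - α)) / (1 - q))⁻¹ ^ p) :
    ∃ f : ℕ → ℝ≥0∞,
      ENNReal.ofReal (1 - q) * ∑' k : ℕ, ENNReal.ofReal (q ^ k) * f k ^ p < ⊤ ∧
      ENNReal.ofReal C *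
          (ENNReal.ofReal (1 - q) * ∑' k : ℕ, ENNReal.ofReal (q ^ k) * f k ^ p) <
        ENNReal.ofReal (1 - q) *
          ∑' m : ℕ, ENNReal.ofReal (q ^ m) * ENNReal.ofReal ((q ^ m) ^ (p * (α - 1))) *
            (ENNReal.ofReal ((1 - q) * q ^ m) *
                ∑' k : ℕ, ENNReal.ofReal (q ^ k) * ENNReal.ofReal ((q ^ (k + m)) ^ (-α)) *
                  f (k + m)) ^ p := by
  have hp0 : 0 < p := by linarith
  obtain ⟨β, hβ, hCβ⟩ := exists_gt_lt_qNumber_inv_rpow hq0 hq1 (by linarith) hp0.le hC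
  obtain ⟨c, rfl⟩ : ∃ c, β = c - α + 1 := ⟨β + α - 1, by ring⟩
  have hcp : 0 < c * p + 1 := by
    have h := mul_pos (show 0 < c + 1 / p by linarith) hp0
    rwa [add_mul, one_div_mul_cancel hp0.ne'] at h
  have hnorm := jackson_integral_rpow_rpow hq0 hq1 hp0.le hcp
  refine ⟨fun k => ENNReal.ofReal ((q ^ k) ^ c), hnorm ▸ ENNReal.ofReal_lt_top, ?_⟩
  beta_reduce
  rw [tsum_congr (q_hardy_rpow_eq hq0 hq1 hp0.le (by linarith)), ENNReal.tsum_mul_left,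
    mul_left_comm (ENNReal.ofReal (1 - q)), hnorm]
  have hpos : 0 < qNumber q (c * p + 1) := qNumber_pos hq0.le hq1 hcp
  exact ENNReal.mul_lt_mul_left (by simpa using hpos) ENNReal.ofReal_ne_top
    ((ENNReal.ofReal_lt_ofReal_iff
      (Real.rpow_pos_of_pos (inv_pos.2 (qNumber_pos hq0.le hq1 (by linarith))) p)).2 hCβ)

/-- Sharpness of the constant `[1-1/p-α]_q^{-p}` in the Hardy `q`-inequality:
no constant `C < [1-1/p-α]_q^{-p}` works for all nonnegative `f` with finite
`∫₀¹ f^p dqt` (with `f` represented by its values `f k = f(q^k)`). -/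
theorem hardy_q_integral_sharp (q p α : ℝ) (hq0 : 0 < q) (hq1 : q < 1) (hp : 1 ≤ p)
    (hα : α < 1 - 1 / p) (C : ℝ) (hC0 : 0 ≤ C)
    (hC : C < (((1 : ℝ) - q ^ (1 - 1 / p - α)) / (1 - q))⁻¹ ^ p) :
    ∃ f : ℕ → ℝ≥0∞,
      ENNReal.ofReal (1 - q) * ∑' k : ℕ, ENNReal.ofReal (q ^ k) * f k ^ p < ⊤ ∧
      ENNReal.ofReal C *
          (ENNReal.ofReal (1 - q) * ∑' k : ℕ, ENNReal.ofReal (q ^ k) * f k ^ p) <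
        ENNReal.ofReal (1 - q) *
          ∑' m : ℕ, ENNReal.ofReal (q ^ m) * ENNReal.ofReal ((q ^ m) ^ (p * (α - 1))) *
            (ENNReal.ofReal ((1 - q) * q ^ m) *
                ∑' k : ℕ, ENNReal.ofReal (q ^ k) * ENNReal.ofReal ((q ^ (k + m)) ^ (-α)) *
                  f (k + m)) ^ p :=
  hardy_q_integral_sharp_general q p α hq0 hq1 hp hα C hC
end
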